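/- Let S = k[x_1,...,x_n] with n ≥ 2, f ∈ S homogeneous of degree d ≥ 2, R = S/(f), m its homogeneous maximal ideal, ψ the 2×n matrix with rows (x_1,...,x_n), (T_1,...,T_n), and f_0 = f, f_1,...,f_d a downgraded sequence of f. Then the set consisting of the 2×2 minors of ψ together with f_0, f_1, ..., f_d is a minimal generating set of the defining ideal J of R(m) in B = S[T_1,...,T_n]: no element of this set lies in the ideal generated by the others. -/

import Mathlib

open MvPolynomial

noncomputable section

variable (k : Type*) [Field k] (n : ℕ)

/-- The polynomial ring `B = k[x₁,…,xₙ,T₁,…,Tₙ]`. -/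
abbrev B := MvPolynomial (Fin n ⊕ Fin n) k

/-- The variable `xᵢ`. -/
def xv (i : Fin n) : B k n := X (Sum.inl i)

/-- The variable `Tᵢ`. -/
def Tv (i : Fin n) : B k n := X (Sum.inr i)

/-- The ideal `I₂(ψ)` of 2×2 minors of the matrix `ψ` with rows `(x₁,…,xₙ)`, `(T₁,…,Tₙ)`. -/
def I2 : Ideal (B k n) :=
  Ideal.span {p | ∃ i j : Fin n, p = xv k n i * Tv k n j - xv k n j * Tv k n i}

/-- The bigrading: `deg xᵢ = (1,0)`, `deg Tᵢ = (0,1)`. -/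
def w : (Fin n ⊕ Fin n) → ℕ × ℕ := Sum.elim (fun _ => (1, 0)) (fun _ => (0, 1))

/-- `fs` (with witnessing columns `co`) is a downgraded sequence of `F` (with `deg F = d`):
`fs 0 = F(x)`, and for `i < d`, `co i` is a column of bihomogeneous entries of equal bidegree
with `(x₁ … xₙ)·(co i) = fs i` and `fs (i+1) = (T₁ … Tₙ)·(co i)`. -/
def IsDowngradedSeq (d : ℕ) (F : MvPolynomial (Fin n) k) (fs : ℕ → B k n)
    (co : ℕ → Fin n → B k n) : Prop :=
  fs 0 = rename Sum.inl F ∧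
  ∀ i < d, (∃ m : ℕ × ℕ, ∀ j, IsWeightedHomogeneous (w n) (co i j) m) ∧
    (∑ j, xv k n j * co i j) = fs i ∧ fs (i + 1) = ∑ j, Tv k n j * co i j

set_option synthInstance.maxHeartbeats 1000000
set_option maxHeartbeats 1000000

/-- The hypersurface ring `R = S/(f) = k[x₁,…,xₙ]/(f)`. -/
abbrev Rring (F : MvPolynomial (Fin n) k) := MvPolynomial (Fin n) k ⧸ Ideal.span {F}

/-- The `k`-algebra map `B = S[T₁,…,Tₙ] → R[t]`, `xᵢ ↦ x̄ᵢ`, `Tᵢ ↦ x̄ᵢ·t`,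
whose image is the Rees algebra `R(𝔪)` of the maximal ideal `𝔪 = (x̄₁,…,x̄ₙ)` of `R`. -/
def toRees (F : MvPolynomial (Fin n) k) : B k n →ₐ[k] Polynomial (Rring k n F) :=
  aeval (Sum.elim
    (fun i => Polynomial.C (Ideal.Quotient.mk (Ideal.span {F}) (X i)))
    (fun i => Polynomial.C (Ideal.Quotient.mk (Ideal.span {F}) (X i)) * Polynomial.X))

/-- The defining ideal `J = ker(B → R(𝔪))` of the Rees algebra `R(𝔪)` as a quotient of `B`. -/
def Jdef (F : MvPolynomial (Fin n) k) : Ideal (B k n) := RingHom.ker (toRees k n F)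

/-- `B → S[t]`: `xᵢ ↦ xᵢ`, `Tᵢ ↦ xᵢ t`. -/
def toS : B k n →ₐ[k] Polynomial (MvPolynomial (Fin n) k) :=
  aeval (Sum.elim (fun i => Polynomial.C (X i)) (fun i => Polynomial.C (X i) * Polynomial.X))

/-- `B → S`: `xᵢ ↦ xᵢ`, `Tᵢ ↦ xᵢ`. -/
def toT : B k n →ₐ[k] MvPolynomial (Fin n) k := aeval (Sum.elim X X)

@[simp] lemma toS_xv (i : Fin n) : toS k n (xv k n i) = Polynomial.C (X i) := by
  simp [toS, xv]

@[simp] lemma toS_Tv (i : Fin n) :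
    toS k n (Tv k n i) = Polynomial.C (X i) * Polynomial.X := by
  simp [toS, Tv]

@[simp] lemma toT_xv (i : Fin n) : toT k n (xv k n i) = X i := by simp [toT, xv]

@[simp] lemma toT_Tv (i : Fin n) : toT k n (Tv k n i) = X i := by simp [toT, Tv]

lemma I2_le_ker_toS : I2 k n ≤ RingHom.ker (toS k n) := by
  rw [I2, Ideal.span_le]
  rintro p ⟨i, j, rfl⟩
  simp only [SetLike.mem_coe, RingHom.mem_ker]
  simp only [map_sub, map_mul, toS_xv, toS_Tv]
  ring

lemma I2_le_ker_toT : I2 k n ≤ RingHom.ker (toT k n) := by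
  rw [I2, Ideal.span_le]
  rintro p ⟨i, j, rfl⟩
  simp only [SetLike.mem_coe, RingHom.mem_ker, map_sub, map_mul, toT_xv, toT_Tv]; ring

lemma span_pairs_eq_I2 :
    Ideal.span {p : B k n | ∃ i j : Fin n, i < j ∧
        p = xv k n i * Tv k n j - xv k n j * Tv k n i} = I2 k n := by
  apply le_antisymm
  · rw [Ideal.span_le]
    rintro p ⟨i, j, _, rfl⟩
    exact Ideal.subset_span ⟨i, j, rfl⟩
  · rw [I2, Ideal.span_le]
    rintro p ⟨i, j, rfl⟩
    rcases lt_trichotomy i j with hij | rfl | hij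
    · exact Ideal.subset_span ⟨i, j, hij, rfl⟩
    · simp
    · have : xv k n i * Tv k n j - xv k n j * Tv k n i
          = -(xv k n j * Tv k n i - xv k n i * Tv k n j) := by ring
      rw [this]
      exact neg_mem (Ideal.subset_span ⟨j, i, hij, rfl⟩)
/-- Collapse of an exponent vector: total `x`-degree in each variable. -/
def gam (u : (Fin n ⊕ Fin n) →₀ ℕ) : Fin n →₀ ℕ :=
  Finsupp.equivFunOnFinite.symm fun j => u (Sum.inl j) + u (Sum.inr j)

/-- The `T`-degree of an exponent vector. -/
def tau (u : (Fin n ⊕ Fin n) →₀ ℕ) : ℕ := ∑ j, u (Sum.inr j)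

/-- Total degree of an exponent vector on `Fin n`. -/
def degF (γ : Fin n →₀ ℕ) : ℕ := ∑ j, γ j

@[simp] lemma gam_apply (u : (Fin n ⊕ Fin n) →₀ ℕ) (j : Fin n) :
    gam n u j = u (Sum.inl j) + u (Sum.inr j) := rfl

lemma toS_monomial (u : (Fin n ⊕ Fin n) →₀ ℕ) (c : k) :
    toS k n (monomial u c) =
      Polynomial.C (monomial (gam n u) c) * Polynomial.X ^ tau n u := by
  rw [toS, aeval_monomial]
  rw [Finsupp.prod_fintype _ _ (fun s => pow_zero _)]
  rw [Fintype.prod_sum_type]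
  simp only [Sum.elim_inl, Sum.elim_inr, mul_pow]
  rw [Finset.prod_mul_distrib]
  have hX : ∀ j : Fin n, (Polynomial.C (X j : MvPolynomial (Fin n) k)) ^ u (Sum.inl j)
      = Polynomial.C ((X j : MvPolynomial (Fin n) k) ^ u (Sum.inl j)) := fun j => by
    rw [map_pow]
  have hmono : monomial (gam n u) c =
      C c * ∏ j : Fin n, (X j : MvPolynomial (Fin n) k) ^ (u (Sum.inl j) + u (Sum.inr j)) := by
    rw [monomial_eq, Finsupp.prod_fintype _ _ (fun s => pow_zero _)]
    rfl
  simp only [hmono, map_mul, map_prod, map_pow, pow_add]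
  rw [Finset.prod_mul_distrib, Finset.prod_pow_eq_pow_sum]
  simp only [algebraMap_eq, tau]
  have : (algebraMap k (Polynomial (MvPolynomial (Fin n) k))) c = Polynomial.C (C c) := by
    rw [IsScalarTower.algebraMap_apply k (MvPolynomial (Fin n) k) (Polynomial (MvPolynomial (Fin n) k)), Polynomial.algebraMap_eq, algebraMap_eq]
  rw [this]
  ring
lemma swap_mem (wb : (Fin n ⊕ Fin n) →₀ ℕ) (p q : Fin n) :
    (monomial (wb + Finsupp.single (Sum.inl p) 1 + Finsupp.single (Sum.inr q) 1) 1 -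
     monomial (wb + Finsupp.single (Sum.inl q) 1 + Finsupp.single (Sum.inr p) 1) 1 : B k n)
      ∈ I2 k n := by
  have hx : ∀ a b : Fin n,
      (monomial (wb + Finsupp.single (Sum.inl a) 1 + Finsupp.single (Sum.inr b) 1) (1:k) : B k n)
        = monomial wb 1 * (xv k n a * Tv k n b) := by
    intro a b
    rw [xv, Tv, X, X, monomial_mul, monomial_mul, mul_one, mul_one, add_assoc]
  rw [hx, hx, ← mul_sub]
  exact Ideal.mul_mem_left _ _ (Ideal.subset_span ⟨p, q, rfl⟩)

lemma connect (N : ℕ) : ∀ u v : (Fin n ⊕ Fin n) →₀ ℕ,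
    (∀ j, u (Sum.inl j) + u (Sum.inr j) = v (Sum.inl j) + v (Sum.inr j)) →
    (∑ j, u (Sum.inr j)) = (∑ j, v (Sum.inr j)) →
    (∑ j, ((u (Sum.inl j) - v (Sum.inl j)) + (v (Sum.inl j) - u (Sum.inl j)))) ≤ N →
    (monomial u 1 - monomial v 1 : B k n) ∈ I2 k n := by
  have heq : ∀ u v : (Fin n ⊕ Fin n) →₀ ℕ,
      (∀ j, u (Sum.inl j) + u (Sum.inr j) = v (Sum.inl j) + v (Sum.inr j)) →
      (∀ j, u (Sum.inl j) = v (Sum.inl j)) → u = v := by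
    intro u v hγ h0
    ext s
    cases s with
    | inl j => exact h0 j
    | inr j => have := hγ j; have := h0 j; omega
  induction N with
  | zero =>
    intro u v hγ hτ hμ
    have h0 : ∀ j, u (Sum.inl j) = v (Sum.inl j) := by
      intro j
      have h1 : ∀ j ∈ Finset.univ, (u (Sum.inl j) - v (Sum.inl j)) + (v (Sum.inl j) - u (Sum.inl j)) = 0 := by
        rw [← Finset.sum_eq_zero_iff]
        omega
      have := h1 j (Finset.mem_univ j)
      omega
    rw [heq u v hγ h0]
    simp only [sub_self]
    exact zero_mem _
  | succ N IH =>
    intro u v hγ hτ hμ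
    by_cases h0 : ∀ j, u (Sum.inl j) = v (Sum.inl j)
    · rw [heq u v hγ h0]
      simp only [sub_self]
      exact zero_mem _
    push_neg at h0
    obtain ⟨p0, hp0⟩ := h0
    have hsum : ∑ j, u (Sum.inl j) = ∑ j, v (Sum.inl j) := by
      have h1 := Finset.sum_congr rfl (fun j (_ : j ∈ Finset.univ) => hγ j)
      rw [Finset.sum_add_distrib, Finset.sum_add_distrib] at h1
      omega
    have hexp : ∃ p, v (Sum.inl p) < u (Sum.inl p) := by
      by_contra hc
      push_neg at hc
      have : ∑ j, u (Sum.inl j) < ∑ j, v (Sum.inl j) :=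
        Finset.sum_lt_sum (fun j _ => hc j)
          ⟨p0, Finset.mem_univ _, lt_of_le_of_ne (hc p0) hp0⟩
      omega
    obtain ⟨p, hp⟩ := hexp
    have hexq : ∃ q, u (Sum.inl q) < v (Sum.inl q) := by
      by_contra hc
      push_neg at hc
      have : ∑ j, v (Sum.inl j) < ∑ j, u (Sum.inl j) :=
        Finset.sum_lt_sum (fun j _ => hc j) ⟨p, Finset.mem_univ _, hp⟩
      omega
    obtain ⟨q, hq⟩ := hexq
    have hpq : p ≠ q := by
      intro h
      rw [h] at hp
      omega
    have hup : 1 ≤ u (Sum.inl p) := by omega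
    have huq : 1 ≤ u (Sum.inr q) := by have := hγ q; omega
    set wb := u - Finsupp.single (Sum.inl p) 1 - Finsupp.single (Sum.inr q) 1 with hwb
    have hwbv : ∀ s, wb s
        = u s - (if Sum.inl p = s then 1 else 0) - (if Sum.inr q = s then 1 else 0) := by
      intro s
      simp [hwb, Finsupp.tsub_apply, Finsupp.single_apply]
    have hu : u = wb + Finsupp.single (Sum.inl p) 1 + Finsupp.single (Sum.inr q) 1 := by
      ext s
      simp only [Finsupp.add_apply, hwbv s, Finsupp.single_apply]
      split_ifs with h1 h2 h2
      · rw [← h2] at h1; simp at h1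
      · have h3 : 1 ≤ u s := h1 ▸ hup
        omega
      · have h3 : 1 ≤ u s := h2 ▸ huq
        omega
      · omega
    set u' := wb + Finsupp.single (Sum.inl q) 1 + Finsupp.single (Sum.inr p) 1 with hu'def
    have hmem : (monomial u 1 - monomial u' 1 : B k n) ∈ I2 k n := by
      rw [hu]
      exact swap_mem k n wb p q
    have hv1 : ∀ j, u' (Sum.inl j)
        = u (Sum.inl j) - (if p = j then 1 else 0) + (if q = j then 1 else 0) := by
      intro j
      simp only [hu'def, Finsupp.add_apply, hwbv, Finsupp.single_apply, Sum.inl.injEq,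
        Sum.inr.injEq, reduceCtorEq, if_false]
      split_ifs with h1 h2 h2 <;>
        first
          | (exact absurd (h1.trans h2.symm) hpq)
          | (exact absurd (h2.trans h1.symm) hpq)
          | (subst h1; omega)
          | (subst h2; omega)
          | omega
    have hv2 : ∀ j, u' (Sum.inr j)
        = u (Sum.inr j) - (if q = j then 1 else 0) + (if p = j then 1 else 0) := by
      intro j
      simp only [hu'def, Finsupp.add_apply, hwbv, Finsupp.single_apply, Sum.inl.injEq,
        Sum.inr.injEq, reduceCtorEq, if_false]
      split_ifs with h1 h2 h2 <;>
        first
          | (exact absurd (h1.trans h2.symm) hpq)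
          | (exact absurd (h2.trans h1.symm) hpq)
          | (subst h1; omega)
          | (subst h2; omega)
          | omega
    have hγ' : ∀ j, u' (Sum.inl j) + u' (Sum.inr j) = v (Sum.inl j) + v (Sum.inr j) := by
      intro j
      rw [hv1 j, hv2 j]
      have := hγ j
      split_ifs with h1 h2 h2 <;>
        first
          | (exact absurd (h1.trans h2.symm) hpq)
          | (exact absurd (h2.trans h1.symm) hpq)
          | (subst h1; omega)
          | (subst h2; omega)
          | omega
    have hτ' : (∑ j, u' (Sum.inr j)) = ∑ j, v (Sum.inr j) := by
      have key : ∀ j ∈ Finset.univ, u' (Sum.inr j) + (if q = j then 1 else 0)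
          = u (Sum.inr j) + (if p = j then 1 else 0) := by
        intro j _
        rw [hv2 j]
        split_ifs with h1 h2 h2 <;>
          first
            | (exact absurd (h1.trans h2.symm) hpq)
            | (exact absurd (h2.trans h1.symm) hpq)
            | (subst h1; omega)
            | (subst h2; omega)
            | omega
      have hs2 := Finset.sum_congr rfl key
      rw [Finset.sum_add_distrib, Finset.sum_add_distrib, Finset.sum_ite_eq,
        Finset.sum_ite_eq] at hs2
      simp only [Finset.mem_univ, if_true] at hs2
      omega
    have hμ' : (∑ j, ((u' (Sum.inl j) - v (Sum.inl j)) + (v (Sum.inl j) - u' (Sum.inl j)))) ≤ N := by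
      have key : ∀ j ∈ Finset.univ,
          ((u' (Sum.inl j) - v (Sum.inl j)) + (v (Sum.inl j) - u' (Sum.inl j)))
            + ((if p = j then 1 else 0) + (if q = j then 1 else 0))
          = (u (Sum.inl j) - v (Sum.inl j)) + (v (Sum.inl j) - u (Sum.inl j)) := by
        intro j _
        rw [hv1 j]
        split_ifs with h1 h2 h2 <;>
          first
            | (exact absurd (h1.trans h2.symm) hpq)
            | (exact absurd (h2.trans h1.symm) hpq)
            | (subst h1; omega)
            | (subst h2; omega)
            | omega
      have hs2 := Finset.sum_congr rfl key
      have hss : ∑ j : Fin n, ((if p = j then (1:ℕ) else 0) + if q = j then 1 else 0) = 2 := by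
        rw [Finset.sum_add_distrib, Finset.sum_ite_eq, Finset.sum_ite_eq]
        simp
      rw [Finset.sum_add_distrib, hss] at hs2
      omega
    have hsplit : (monomial u 1 - monomial v 1 : B k n)
        = (monomial u 1 - monomial u' 1) + (monomial u' 1 - monomial v 1) := by ring
    rw [hsplit]
    exact add_mem hmem (IH u' v hγ' hτ' hμ')
lemma exists_split (γ : Fin n →₀ ℕ) (i : ℕ) (hi : i ≤ degF n γ) :
    ∃ β : Fin n →₀ ℕ, β ≤ γ ∧ degF n β = i := by
  induction i with
  | zero => exact ⟨0, zero_le, by simp [degF]⟩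
  | succ i IH =>
    obtain ⟨β, hβ, hd⟩ := IH (le_trans (Nat.le_succ i) hi)
    have hlt : degF n β < degF n γ := by omega
    have hex : ∃ j, β j < γ j := by
      by_contra hc
      push_neg at hc
      have : degF n γ ≤ degF n β := Finset.sum_le_sum (fun j _ => hc j)
      omega
    obtain ⟨j, hj⟩ := hex
    refine ⟨β + Finsupp.single j 1, ?_, ?_⟩
    · rw [Finsupp.le_def]
      intro s
      have := Finsupp.le_def.mp hβ s
      simp only [Finsupp.add_apply, Finsupp.single_apply]
      by_cases hs : j = s
      · subst hs; rw [if_pos rfl]; omega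
      · simp [hs]; omega
    · have hdeg : degF n (β + Finsupp.single j 1) = degF n β + 1 := by
        simp [degF, Finset.sum_add_distrib, Finsupp.single_apply]
      omega

/-- A choice of sub-exponent of `γ` of total degree `i` (junk when `i > deg γ`). -/
def splitBeta (γ : Fin n →₀ ℕ) (i : ℕ) : Fin n →₀ ℕ :=
  if h : i ≤ degF n γ then Classical.choose (exists_split n γ i h) else 0

lemma splitBeta_le (γ : Fin n →₀ ℕ) (i : ℕ) (h : i ≤ degF n γ) :
    splitBeta n γ i ≤ γ := by
  rw [splitBeta, dif_pos h]
  exact (Classical.choose_spec (exists_split n γ i h)).1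

lemma splitBeta_deg (γ : Fin n →₀ ℕ) (i : ℕ) (h : i ≤ degF n γ) :
    degF n (splitBeta n γ i) = i := by
  rw [splitBeta, dif_pos h]
  exact (Classical.choose_spec (exists_split n γ i h)).2

/-- The canonical exponent vector in `B` with collapse `γ` and `T`-degree `i`. -/
def splitExp (γ : Fin n →₀ ℕ) (i : ℕ) : (Fin n ⊕ Fin n) →₀ ℕ :=
  Finsupp.mapDomain Sum.inl (γ - splitBeta n γ i) +
    Finsupp.mapDomain Sum.inr (splitBeta n γ i)

lemma splitExp_inl (γ : Fin n →₀ ℕ) (i : ℕ) (j : Fin n) :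
    splitExp n γ i (Sum.inl j) = γ j - splitBeta n γ i j := by
  rw [splitExp, Finsupp.add_apply, Finsupp.mapDomain_apply Sum.inl_injective,
    Finsupp.mapDomain_notin_range _ _ (by simp), Finsupp.tsub_apply, add_zero]

lemma splitExp_inr (γ : Fin n →₀ ℕ) (i : ℕ) (j : Fin n) :
    splitExp n γ i (Sum.inr j) = splitBeta n γ i j := by
  rw [splitExp, Finsupp.add_apply, Finsupp.mapDomain_apply Sum.inr_injective,
    Finsupp.mapDomain_notin_range _ _ (by simp), zero_add]

lemma gam_splitExp (γ : Fin n →₀ ℕ) (i : ℕ) (h : i ≤ degF n γ) :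
    gam n (splitExp n γ i) = γ := by
  ext j
  rw [gam_apply, splitExp_inl, splitExp_inr]
  have := Finsupp.le_def.mp (splitBeta_le n γ i h) j
  omega

lemma tau_splitExp (γ : Fin n →₀ ℕ) (i : ℕ) (h : i ≤ degF n γ) :
    tau n (splitExp n γ i) = i := by
  have h1 : tau n (splitExp n γ i) = degF n (splitBeta n γ i) :=
    Finset.sum_congr rfl fun j _ => splitExp_inr n γ i j
  rw [h1, splitBeta_deg n γ i h]

lemma tau_le_degF_gam (u : (Fin n ⊕ Fin n) →₀ ℕ) : tau n u ≤ degF n (gam n u) := by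
  rw [tau, degF]
  exact Finset.sum_le_sum fun j _ => by rw [gam_apply]; omega

/-- The canonical representative of an exponent vector modulo `I2`. -/
def canon (u : (Fin n ⊕ Fin n) →₀ ℕ) : (Fin n ⊕ Fin n) →₀ ℕ :=
  splitExp n (gam n u) (tau n u)

lemma canon_def (u : (Fin n ⊕ Fin n) →₀ ℕ) :
    canon n u = splitExp n (gam n u) (tau n u) := rfl

lemma gam_canon (u : (Fin n ⊕ Fin n) →₀ ℕ) : gam n (canon n u) = gam n u := by
  rw [canon_def]
  exact gam_splitExp n _ _ (tau_le_degF_gam n u)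

lemma tau_canon (u : (Fin n ⊕ Fin n) →₀ ℕ) : tau n (canon n u) = tau n u := by
  rw [canon_def]
  exact tau_splitExp n _ _ (tau_le_degF_gam n u)

lemma canon_canon (u : (Fin n ⊕ Fin n) →₀ ℕ) : canon n (canon n u) = canon n u := by
  rw [canon_def n (canon n u), gam_canon, tau_canon, ← canon_def]

lemma monomial_sub_canon_mem (u : (Fin n ⊕ Fin n) →₀ ℕ) (c : k) :
    (monomial u c - monomial (canon n u) c : B k n) ∈ I2 k n := by
  have h1 : (monomial u c - monomial (canon n u) c : B k n)
      = C c * (monomial u 1 - monomial (canon n u) 1) := by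
    rw [mul_sub, C_mul_monomial, C_mul_monomial, mul_one]
  rw [h1]
  apply Ideal.mul_mem_left
  apply connect k n (∑ j, ((u (Sum.inl j) - canon n u (Sum.inl j))
      + (canon n u (Sum.inl j) - u (Sum.inl j)))) u (canon n u) _ _ le_rfl
  · intro j
    have h2 : gam n (canon n u) j = gam n u j := by rw [gam_canon]
    rw [gam_apply, gam_apply] at h2
    omega
  · have h2 := tau_canon n u
    rw [tau, tau] at h2
    omega

lemma canon_eq_of (u v : (Fin n ⊕ Fin n) →₀ ℕ) (hγ : gam n u = gam n v)
    (hτ : tau n u = tau n v) : canon n u = canon n v := by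
  rw [canon_def, canon_def, hγ, hτ]

/-- A polynomial supported on canonical exponents killed by `toS` is zero. -/
lemma canon_supported_eq_zero (h : B k n) (hc : ∀ u ∈ h.support, canon n u = u)
    (h0 : toS k n h = 0) : h = 0 := by
  by_contra hne
  obtain ⟨u0, hu0⟩ := Finset.nonempty_of_ne_empty (fun he => hne (support_eq_empty.mp he))
  have hS : toS k n h = ∑ u ∈ h.support,
      Polynomial.C (monomial (gam n u) (coeff u h)) * Polynomial.X ^ tau n u := by
    conv_lhs => rw [as_sum h]
    rw [map_sum]
    exact Finset.sum_congr rfl fun u _ => toS_monomial k n u (coeff u h)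
  have hterm : ∀ u : (Fin n ⊕ Fin n) →₀ ℕ,
      MvPolynomial.coeff (gam n u0) (Polynomial.coeff
        (Polynomial.C (monomial (gam n u) (coeff u h)) * Polynomial.X ^ tau n u) (tau n u0))
      = if tau n u = tau n u0 ∧ gam n u = gam n u0 then coeff u h else 0 := by
    intro u
    rw [Polynomial.coeff_C_mul, Polynomial.coeff_X_pow, mul_ite, mul_one, mul_zero]
    by_cases h1 : tau n u0 = tau n u
    · rw [if_pos h1, coeff_monomial]
      by_cases h2 : gam n u = gam n u0
      · rw [if_pos h2, if_pos ⟨h1.symm, h2⟩]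
      · rw [if_neg h2, if_neg (by tauto)]
    · rw [if_neg h1, coeff_zero, if_neg (by tauto)]
  have hcoeff : coeff (gam n u0) (Polynomial.coeff (toS k n h) (tau n u0)) = coeff u0 h := by
    rw [hS, Polynomial.finset_sum_coeff]
    rw [coeff_sum]
    rw [Finset.sum_congr rfl fun u (_ : u ∈ h.support) => hterm u]
    rw [Finset.sum_eq_single u0]
    · rw [if_pos ⟨rfl, rfl⟩]
    · intro u hu hne0
      rw [if_neg]
      rintro ⟨ht, hg⟩
      apply hne0
      rw [← hc u hu, ← hc u0 hu0]
      exact canon_eq_of n u u0 hg ht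
    · intro hnot
      exact absurd hu0 hnot
  rw [h0] at hcoeff
  simp only [Polynomial.coeff_zero, coeff_zero] at hcoeff
  exact (mem_support_iff.mp hu0) hcoeff.symm

lemma ker_toS_le_I2 : RingHom.ker (toS k n) ≤ I2 k n := by
  classical
  intro g hg
  rw [RingHom.mem_ker] at hg
  set g' := ∑ u ∈ g.support, monomial (canon n u) (coeff u g) with hg'
  have h1 : g - g' ∈ I2 k n := by
    have : g - g' = ∑ u ∈ g.support,
        (monomial u (coeff u g) - monomial (canon n u) (coeff u g)) := by
      rw [Finset.sum_sub_distrib, ← as_sum, hg']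
    rw [this]
    exact Ideal.sum_mem _ fun u _ => monomial_sub_canon_mem k n u (coeff u g)
  have h2 : toS k n g' = 0 := by
    have : toS k n g' = toS k n g := by
      rw [hg']
      conv_rhs => rw [as_sum g]
      rw [map_sum, map_sum]
      refine Finset.sum_congr rfl fun u _ => ?_
      rw [toS_monomial, toS_monomial, gam_canon, tau_canon]
    rw [this, hg]
  have h3 : g' = 0 := by
    apply canon_supported_eq_zero k n g' _ h2
    intro u hu
    rw [hg'] at hu
    have hsub := MvPolynomial.support_sum hu
    obtain ⟨v, hv, huv⟩ := Finset.mem_biUnion.mp hsub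
    rw [support_monomial] at huv
    by_cases hz : coeff v g = 0
    · rw [if_pos hz] at huv
      exact absurd huv (Finset.notMem_empty u)
    · rw [if_neg hz] at huv
      rw [Finset.mem_singleton] at huv
      rw [huv]
      exact canon_canon n v
  simpa [h3] using h1
lemma aevalCX (p : MvPolynomial (Fin n) k) :
    aeval (fun i => Polynomial.C (X i : MvPolynomial (Fin n) k)) p = Polynomial.C p := by
  induction p using MvPolynomial.induction_on with
  | C a =>
    rw [aeval_C, IsScalarTower.algebraMap_apply k (MvPolynomial (Fin n) k)
      (Polynomial (MvPolynomial (Fin n) k)), Polynomial.algebraMap_eq, algebraMap_eq]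
  | add p q hp hq => rw [map_add, hp, hq, map_add]
  | mul_X p i hp => rw [map_mul, hp, aeval_X, map_mul]

lemma toS_rename (p : MvPolynomial (Fin n) k) :
    toS k n (rename Sum.inl p) = Polynomial.C p := by
  rw [toS, aeval_rename]
  exact aevalCX k n p

lemma toT_rename (p : MvPolynomial (Fin n) k) :
    toT k n (rename Sum.inl p) = p := by
  rw [toT, aeval_rename]
  have : (Sum.elim (X : Fin n → MvPolynomial (Fin n) k) X) ∘ Sum.inl = X := rfl
  rw [this]
  exact aeval_X_left_apply p

lemma toRees_eq (F : MvPolynomial (Fin n) k) (g : B k n) :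
    toRees k n F g = Polynomial.map (Ideal.Quotient.mk (Ideal.span {F})) (toS k n g) := by
  have : toRees k n F =
      ((Polynomial.mapAlgHom (Ideal.Quotient.mkₐ k (Ideal.span {F}))).comp (toS k n)) := by
    apply MvPolynomial.algHom_ext
    intro s
    cases s with
    | inl i =>
      simp [toRees, toS, Polynomial.mapAlgHom]
    | inr i =>
      simp [toRees, toS, Polynomial.mapAlgHom]
  rw [this]
  rfl

lemma mem_Jdef_iff (F : MvPolynomial (Fin n) k) (g : B k n) :
    g ∈ Jdef k n F ↔ ∀ i, (toS k n g).coeff i ∈ Ideal.span {F} := by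
  rw [Jdef, RingHom.mem_ker]
  have : toRees k n F g = 0 ↔
      ∀ i, (Polynomial.map (Ideal.Quotient.mk (Ideal.span {F})) (toS k n g)).coeff i = 0 := by
    rw [toRees_eq]
    exact ⟨fun h i => by rw [h, Polynomial.coeff_zero], fun h => Polynomial.ext h⟩
  rw [this]
  apply forall_congr'
  intro i
  rw [Polynomial.coeff_map, Ideal.Quotient.eq_zero_iff_mem]

section seq

variable (d : ℕ) (F : MvPolynomial (Fin n) k) (fs : ℕ → B k n) (co : ℕ → Fin n → B k n)

lemma toS_fs (h : IsDowngradedSeq k n d F fs co) :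
    ∀ i ≤ d, toS k n (fs i) = Polynomial.C F * Polynomial.X ^ i := by
  intro i
  induction i with
  | zero => intro _; rw [h.1, toS_rename, pow_zero, mul_one]
  | succ i IH =>
    intro hid
    obtain ⟨_, hx, hT⟩ := h.2 i (by omega)
    rw [hT, map_sum]
    have h1 : ∀ j : Fin n, toS k n (Tv k n j * co i j)
        = Polynomial.X * (toS k n (xv k n j * co i j)) := by
      intro j
      rw [map_mul, map_mul, toS_Tv, toS_xv]
      ring
    rw [Finset.sum_congr rfl fun j _ => h1 j, ← Finset.mul_sum, ← map_sum, hx,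
      IH (by omega)]
    ring

lemma toT_fs (h : IsDowngradedSeq k n d F fs co) :
    ∀ i ≤ d, toT k n (fs i) = F := by
  intro i
  induction i with
  | zero => intro _; rw [h.1, toT_rename]
  | succ i IH =>
    intro hid
    obtain ⟨_, hx, hT⟩ := h.2 i (by omega)
    rw [hT, map_sum]
    have h1 : ∀ j : Fin n, toT k n (Tv k n j * co i j) = toT k n (xv k n j * co i j) := by
      intro j
      rw [map_mul, map_mul, toT_Tv, toT_xv]
    rw [Finset.sum_congr rfl fun j _ => h1 j, ← map_sum, hx, IH (by omega)]

lemma fs_ne_zero (h : IsDowngradedSeq k n d F fs co) (hF0 : F ≠ 0) :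
    ∀ i ≤ d, fs i ≠ 0 := by
  intro i hid hz
  have := toT_fs k n d F fs co h i hid
  rw [hz, map_zero] at this
  exact hF0 this.symm

end seq
lemma toS_coeff_deg (g : B k n) (i : ℕ) (u : Fin n →₀ ℕ)
    (hc : coeff u ((toS k n g).coeff i) ≠ 0) : i ≤ degF n u := by
  have hS : toS k n g = ∑ v ∈ g.support,
      Polynomial.C (monomial (gam n v) (coeff v g)) * Polynomial.X ^ tau n v := by
    conv_lhs => rw [as_sum g]
    rw [map_sum]
    exact Finset.sum_congr rfl fun v _ => toS_monomial k n v (coeff v g)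
  rw [hS, Polynomial.finset_sum_coeff, coeff_sum] at hc
  obtain ⟨v, _, hv⟩ := Finset.exists_ne_zero_of_sum_ne_zero hc
  rw [Polynomial.coeff_C_mul, Polynomial.coeff_X_pow, mul_ite, mul_one, mul_zero] at hv
  by_cases ht : i = tau n v
  · rw [if_pos ht, coeff_monomial] at hv
    by_cases hg : gam n v = u
    · rw [ht, ← hg]
      exact tau_le_degF_gam n v
    · rw [if_neg hg] at hv
      exact absurd rfl hv
  · rw [if_neg ht] at hv
    exact absurd rfl hv

lemma degF_eq_weight (u : Fin n →₀ ℕ) : Finsupp.weight (1 : Fin n → ℕ) u = degF n u := by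
  rw [Finsupp.weight_apply, degF, Finsupp.sum_fintype]
  · exact Finset.sum_congr rfl fun j _ => by simp
  · intro j; simp

lemma low_degree_factor {d : ℕ} {F : MvPolynomial (Fin n) k} (hF : F.IsHomogeneous d)
    (hF0 : F ≠ 0) (q : MvPolynomial (Fin n) k) (i : ℕ)
    (hdeg : ∀ u : Fin n →₀ ℕ, coeff u (F * q) ≠ 0 → i ≤ degF n u) :
    ∀ u : Fin n →₀ ℕ, coeff u q ≠ 0 → i - d ≤ degF n u := by
  intro u0 hu0
  by_contra hcon
  push_neg at hcon
  classical
  have hne : q ≠ 0 := fun hz => hu0 (by rw [hz, coeff_zero])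
  obtain ⟨u1, hu1s, hu1min⟩ := Finset.exists_min_image q.support (degF n)
    ⟨u0, mem_support_iff.mpr hu0⟩
  set e1 := degF n u1 with he1
  have hdd : ∀ u : Fin n →₀ ℕ, Finsupp.degree u = degF n u := fun u => by
    rw [Finsupp.degree_eq_weight_one]
    exact degF_eq_weight n u
  have hqe : coeff u1 (homogeneousComponent e1 q) = coeff u1 q := by
    rw [coeff_homogeneousComponent, if_pos (hdd u1)]
  have hqe0 : homogeneousComponent e1 q ≠ 0 :=
    fun hz => (mem_support_iff.mp hu1s) (by rw [← hqe, hz, coeff_zero])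
  have hprod0 : F * homogeneousComponent e1 q ≠ 0 := mul_ne_zero hF0 hqe0
  obtain ⟨v, hv⟩ := exists_coeff_ne_zero hprod0
  have hvdeg : degF n v = d + e1 := by
    have hhom : (F * homogeneousComponent e1 q).IsHomogeneous (d + e1) :=
      hF.mul (homogeneousComponent_isHomogeneous e1 q)
    have h2 := hhom hv
    rw [degF_eq_weight] at h2
    exact h2
  have hsame : coeff v (F * q) = coeff v (F * homogeneousComponent e1 q) := by
    rw [coeff_mul, coeff_mul]
    apply Finset.sum_congr rfl
    rintro ⟨a, b⟩ hab
    by_cases hFa : coeff a F = 0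
    · rw [hFa, zero_mul, zero_mul]
    · have hda : degF n a = d := by
        have h3 := hF hFa
        rw [degF_eq_weight] at h3
        exact h3
      have hab2 : a + b = v := Finset.HasAntidiagonal.mem_antidiagonal.mp hab
      have hdegadd : degF n a + degF n b = degF n v := by
        rw [← hab2, degF, degF, degF, ← Finset.sum_add_distrib]
        exact Finset.sum_congr rfl fun j _ => rfl
      have hdb : Finsupp.degree b = e1 := by rw [hdd]; omega
      rw [coeff_homogeneousComponent, if_pos hdb]
  have hfin : i ≤ degF n v := hdeg v (by rw [hsame]; exact hv)
  have hmin := hu1min u0 (mem_support_iff.mpr hu0)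
  omega

lemma Jdef_le_span (d : ℕ) (F : MvPolynomial (Fin n) k) (hF : F.IsHomogeneous d)
    (hF0 : F ≠ 0) (fs : ℕ → B k n) (co : ℕ → Fin n → B k n)
    (h : IsDowngradedSeq k n d F fs co) :
    Jdef k n F ≤ Ideal.span
        ({p | ∃ i j : Fin n, i < j ∧ p = xv k n i * Tv k n j - xv k n j * Tv k n i} ∪
          {p | ∃ i ≤ d, p = fs i}) := by
  intro g hg
  rw [mem_Jdef_iff] at hg
  have hq : ∀ i, ∃ qi, (toS k n g).coeff i = F * qi := by
    intro i
    exact (Ideal.mem_span_singleton.mp (hg i))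
  choose q hqspec using hq
  -- lift of `F * q i` into the span
  set lift : ℕ → B k n := fun i =>
    fs (min i d) * ∑ u ∈ (q i).support, monomial (splitExp n u (i - min i d)) (coeff u (q i))
    with hlift
  have hdegq : ∀ i, ∀ u ∈ (q i).support, i - min i d ≤ degF n u := by
    intro i u hu
    have h1 : ∀ u : Fin n →₀ ℕ, coeff u (F * q i) ≠ 0 → i ≤ degF n u := by
      intro u hc
      exact toS_coeff_deg k n g i u (by rw [hqspec i]; exact hc)
    have h2 := low_degree_factor k n hF hF0 (q i) i h1 u (mem_support_iff.mp hu)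
    omega
  have hliftS : ∀ i, toS k n (lift i) = Polynomial.C ((toS k n g).coeff i) * Polynomial.X ^ i := by
    intro i
    rw [hlift]
    simp only
    rw [map_mul, map_sum, toS_fs k n d F fs co h (min i d) (min_le_right i d)]
    have h1 : ∀ u ∈ (q i).support,
        toS k n (monomial (splitExp n u (i - min i d)) (coeff u (q i)))
          = Polynomial.C (monomial u (coeff u (q i))) * Polynomial.X ^ (i - min i d) := by
      intro u hu
      rw [toS_monomial, gam_splitExp n u _ (hdegq i u hu), tau_splitExp n u _ (hdegq i u hu)]
    rw [Finset.sum_congr rfl h1, ← Finset.sum_mul, ← map_sum, ← as_sum, hqspec i, map_mul]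
    rw [mul_assoc, mul_comm (Polynomial.X ^ min i d), mul_assoc, ← pow_add]
    have : i - min i d + min i d = i := by omega
    rw [this, ← mul_assoc]
  have hliftmem : ∀ i, lift i ∈ Ideal.span
      ({p | ∃ i j : Fin n, i < j ∧ p = xv k n i * Tv k n j - xv k n j * Tv k n i} ∪
        {p | ∃ i ≤ d, p = fs i}) := by
    intro i
    apply Ideal.mul_mem_right
    apply Ideal.subset_span
    exact Or.inr ⟨min i d, min_le_right i d, rfl⟩
  set G := ∑ i ∈ (toS k n g).support, lift i with hG
  have hGmem : G ∈ Ideal.span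
      ({p | ∃ i j : Fin n, i < j ∧ p = xv k n i * Tv k n j - xv k n j * Tv k n i} ∪
        {p | ∃ i ≤ d, p = fs i}) := Ideal.sum_mem _ fun i _ => hliftmem i
  have hGS : toS k n G = toS k n g := by
    rw [hG, map_sum]
    rw [Finset.sum_congr rfl fun i _ => hliftS i]
    conv_rhs => rw [← Polynomial.sum_C_mul_X_pow_eq (toS k n g)]
    rfl
  have hker : g - G ∈ I2 k n := by
    apply ker_toS_le_I2
    rw [RingHom.mem_ker, map_sub, hGS, sub_self]
  have hI2span : I2 k n ≤ Ideal.span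
      ({p | ∃ i j : Fin n, i < j ∧ p = xv k n i * Tv k n j - xv k n j * Tv k n i} ∪
        {p | ∃ i ≤ d, p = fs i}) := by
    rw [← span_pairs_eq_I2]
    exact Ideal.span_mono Set.subset_union_left
  have : g = (g - G) + G := by ring
  rw [this]
  exact add_mem (hI2span hker) hGmem

lemma span_le_Jdef (d : ℕ) (F : MvPolynomial (Fin n) k)
    (fs : ℕ → B k n) (co : ℕ → Fin n → B k n)
    (h : IsDowngradedSeq k n d F fs co) :
    Ideal.span
        ({p | ∃ i j : Fin n, i < j ∧ p = xv k n i * Tv k n j - xv k n j * Tv k n i} ∪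
          {p | ∃ i ≤ d, p = fs i}) ≤ Jdef k n F := by
  rw [Ideal.span_le]
  rintro p (⟨i, j, _, rfl⟩ | ⟨i, hid, rfl⟩)
  · have hmem : (xv k n i * Tv k n j - xv k n j * Tv k n i) ∈ RingHom.ker (toS k n) := by
      rw [RingHom.mem_ker]
      simp only [map_sub, map_mul, toS_xv, toS_Tv]
      ring
    simp only [SetLike.mem_coe, Jdef, RingHom.mem_ker, toRees_eq]
    rw [RingHom.mem_ker] at hmem
    rw [hmem, Polynomial.map_zero]
  · simp only [SetLike.mem_coe, Jdef, RingHom.mem_ker, toRees_eq]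
    rw [toS_fs k n d F fs co h i hid, Polynomial.map_mul, Polynomial.map_C]
    have : Ideal.Quotient.mk (Ideal.span {F}) F = 0 :=
      Ideal.Quotient.eq_zero_iff_mem.mpr (Ideal.subset_span rfl)
    rw [this, Polynomial.C_0, zero_mul]
lemma wHC_mul_right {a : B k n} {m0 : ℕ × ℕ} (ha : IsWeightedHomogeneous (w n) a m0)
    (b : B k n) (m : ℕ × ℕ) :
    weightedHomogeneousComponent (w n) (m0 + m) (b * a)
      = weightedHomogeneousComponent (w n) m b * a := by
  induction b using MvPolynomial.induction_on' with
  | monomial u c =>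
    have hm : IsWeightedHomogeneous (w n) (monomial u c : B k n) (Finsupp.weight (w n) u) :=
      isWeightedHomogeneous_monomial _ _ _ rfl
    have hprod : IsWeightedHomogeneous (w n) ((monomial u c : B k n) * a)
        (Finsupp.weight (w n) u + m0) := hm.mul ha
    by_cases hw : Finsupp.weight (w n) u = m
    · rw [hw] at hprod hm
      rw [add_comm m0 m, IsWeightedHomogeneous.weightedHomogeneousComponent_same hprod,
        IsWeightedHomogeneous.weightedHomogeneousComponent_same hm]
    · rw [IsWeightedHomogeneous.weightedHomogeneousComponent_ne _ hprod
          (fun hcon => hw (by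
            rw [add_comm m0 m] at hcon
            exact (add_right_cancel hcon).symm)),
        IsWeightedHomogeneous.weightedHomogeneousComponent_ne _ hm
          (fun hcon => hw hcon.symm), zero_mul]
  | add p q hp hq =>
    rw [add_mul, map_add, map_add, hp, hq, add_mul]

lemma wHC_mul_right_zero {a : B k n} {m0 : ℕ × ℕ} (ha : IsWeightedHomogeneous (w n) a m0)
    (b : B k n) (m : ℕ × ℕ) (hm : ¬ m0 ≤ m) :
    weightedHomogeneousComponent (w n) m (b * a) = 0 := by
  induction b using MvPolynomial.induction_on' with
  | monomial u c =>
    have hm' : IsWeightedHomogeneous (w n) (monomial u c : B k n) (Finsupp.weight (w n) u) :=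
      isWeightedHomogeneous_monomial _ _ _ rfl
    have hprod : IsWeightedHomogeneous (w n) ((monomial u c : B k n) * a)
        (Finsupp.weight (w n) u + m0) := hm'.mul ha
    refine IsWeightedHomogeneous.weightedHomogeneousComponent_ne _ hprod fun hcon => ?_
    exact hm (hcon ▸ le_add_self)
  | add p q hp hq =>
    rw [add_mul, map_add, hp, hq, add_zero]

lemma w_ne_zero (s : Fin n ⊕ Fin n) : w n s ≠ 0 := by
  cases s with
  | inl i => simp [w, Prod.ext_iff]
  | inr i => simp [w, Prod.ext_iff]

lemma xv_hom (i : Fin n) : IsWeightedHomogeneous (w n) (xv k n i) (1, 0) :=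
  isWeightedHomogeneous_X k (w n) (Sum.inl i)

lemma Tv_hom (i : Fin n) : IsWeightedHomogeneous (w n) (Tv k n i) (0, 1) :=
  isWeightedHomogeneous_X k (w n) (Sum.inr i)

lemma minor_hom (i j : Fin n) :
    IsWeightedHomogeneous (w n) (xv k n i * Tv k n j - xv k n j * Tv k n i) (1, 1) := by
  have h1 : ((1:ℕ), (1:ℕ)) = ((1,0) : ℕ × ℕ) + (0,1) := by simp
  have ha : IsWeightedHomogeneous (w n) (xv k n i * Tv k n j) (1, 1) := by
    rw [h1]; exact (xv_hom k n i).mul (Tv_hom k n j)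
  have hb : IsWeightedHomogeneous (w n) (xv k n j * Tv k n i) (1, 1) := by
    rw [h1]; exact (xv_hom k n j).mul (Tv_hom k n i)
  rw [← mem_weightedHomogeneousSubmodule] at ha hb ⊢
  exact Submodule.sub_mem _ ha hb

lemma sum_pair_left (v : Fin n →₀ ℕ) :
    (Finsupp.sum v fun _ e => ((e, 0) : ℕ × ℕ)) = ((Finsupp.sum v fun _ e => e), 0) := by
  classical
  rw [Finsupp.sum, Finsupp.sum]
  refine Prod.ext ?_ ?_
  · rw [Prod.fst_sum]
  · rw [Prod.snd_sum]
    simp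

lemma rename_hom {d : ℕ} {F : MvPolynomial (Fin n) k} (hF : F.IsHomogeneous d) :
    IsWeightedHomogeneous (w n) (rename Sum.inl F : B k n) (d, 0) := by
  intro u hu
  obtain ⟨v, hvu, hv⟩ := coeff_rename_ne_zero _ _ _ hu
  have hdv : Finsupp.weight 1 v = d := hF hv
  rw [← hvu]
  rw [Finsupp.weight_apply, Finsupp.sum_mapDomain_index]
  · have h2 : (Finsupp.sum v fun j e => e • w n (Sum.inl j))
        = (Finsupp.sum v fun _ e => ((e, 0) : ℕ × ℕ)) :=
      Finsupp.sum_congr fun j _ => by simp [w, Prod.ext_iff]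
    rw [h2, sum_pair_left]
    have h4 : (Finsupp.sum v fun _ e => e) = d := by
      rw [← hdv, Finsupp.weight_apply]
      exact Finsupp.sum_congr fun j _ => by simp
    rw [h4]
  · intro j; simp
  · intro j e1 e2; simp [Prod.ext_iff, add_smul]

lemma fs_hom (d : ℕ) (F : MvPolynomial (Fin n) k) (fs : ℕ → B k n) (co : ℕ → Fin n → B k n)
    (h : IsDowngradedSeq k n d F fs co) (hF : F.IsHomogeneous d) (hF0 : F ≠ 0) :
    ∀ i ≤ d, IsWeightedHomogeneous (w n) (fs i) (d - i, i) := by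
  intro i
  induction i with
  | zero =>
    intro _
    rw [h.1]
    exact rename_hom k n hF
  | succ i IH =>
    intro hid
    obtain ⟨⟨m, hco⟩, hx, hT⟩ := h.2 i (by omega)
    have hfsi : IsWeightedHomogeneous (w n) (fs i) ((1, 0) + m) := by
      rw [← hx]
      apply IsWeightedHomogeneous.sum
      intro j _
      exact (xv_hom k n j).mul (hco j)
    have hne : fs i ≠ 0 := fs_ne_zero k n d F fs co h hF0 i (by omega)
    have hm : m = (d - i - 1, i) := by
      have heq := IsWeightedHomogeneous.inj_right hne (IH (by omega)) hfsi
      have h1 : d - i = 1 + m.1 := congrArg Prod.fst heq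
      have h2 : i = 0 + m.2 := congrArg Prod.snd heq
      have : m = (m.1, m.2) := rfl
      rw [this]
      simp only [Prod.mk.injEq]
      omega
    have hstep : IsWeightedHomogeneous (w n) (fs (i + 1)) ((0, 1) + m) := by
      rw [hT]
      apply IsWeightedHomogeneous.sum
      intro j _
      exact (Tv_hom k n j).mul (hco j)
    have : ((0:ℕ), (1:ℕ)) + m = (d - (i+1), i+1) := by
      rw [hm, Prod.mk_add_mk]
      simp only [Prod.mk.injEq]
      omega
    rwa [this] at hstep

lemma wHC_zero_eq_C (r : B k n) :
    weightedHomogeneousComponent (w n) ((0:ℕ), (0:ℕ)) r = C (coeff 0 r) := by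
  exact weightedHomogeneousComponent_zero r (w_ne_zero n)
lemma xvTv_monomial (a b : Fin n) :
    xv k n a * Tv k n b
      = monomial (Finsupp.single (Sum.inl a) 1 + Finsupp.single (Sum.inr b) 1) (1:k) := by
  rw [xv, Tv, X, X, monomial_mul, one_mul]

lemma pair_exp_eq_iff (a b c e : Fin n) :
    Finsupp.single (Sum.inl a) 1 + Finsupp.single (Sum.inr b) 1
      = Finsupp.single (Sum.inl c) 1 + Finsupp.single (Sum.inr e) (1:ℕ) ↔ a = c ∧ b = e := by
  constructor
  · intro h
    constructor
    · by_cases hac : a = c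
      · exact hac
      · exfalso
        have h1 := DFunLike.congr_fun h (Sum.inl c)
        simp [Finsupp.single_apply, hac] at h1
    · by_cases hbe : b = e
      · exact hbe
      · exfalso
        have h2 := DFunLike.congr_fun h (Sum.inr e)
        simp [Finsupp.single_apply, hbe] at h2
  · rintro ⟨rfl, rfl⟩
    rfl

lemma coeff_u0_self {p q : Fin n} (hpq : p < q) :
    coeff (Finsupp.single (Sum.inl p) 1 + Finsupp.single (Sum.inr q) 1)
        (xv k n p * Tv k n q - xv k n q * Tv k n p) = 1 := by
  rw [coeff_sub, xvTv_monomial, xvTv_monomial, coeff_monomial, coeff_monomial,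
    if_pos rfl, if_neg, sub_zero]
  intro hcon
  obtain ⟨h1, _⟩ := (pair_exp_eq_iff n q p p q).mp hcon
  exact absurd (h1 ▸ hpq) (lt_irrefl _)

lemma coeff_u0_other {p q a b : Fin n} (hpq : p < q) (hab : a < b)
    (hne : ¬(a = p ∧ b = q)) :
    coeff (Finsupp.single (Sum.inl p) 1 + Finsupp.single (Sum.inr q) 1)
        (xv k n a * Tv k n b - xv k n b * Tv k n a) = 0 := by
  rw [coeff_sub, xvTv_monomial, xvTv_monomial, coeff_monomial, coeff_monomial,
    if_neg, if_neg, sub_zero]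
  · intro hcon
    obtain ⟨h1, h2⟩ := (pair_exp_eq_iff n b a p q).mp hcon
    subst h1; subst h2
    exact absurd hab (not_lt.mpr (le_of_lt hpq))
  · intro hcon
    exact hne ((pair_exp_eq_iff n a b p q).mp hcon)

section minimality

variable (d : ℕ) (F : MvPolynomial (Fin n) k) (fs : ℕ → B k n) (co : ℕ → Fin n → B k n)

lemma minimal_fs (hd : 2 ≤ d) (hF : F.IsHomogeneous d) (hF0 : F ≠ 0)
    (h : IsDowngradedSeq k n d F fs co) (i : ℕ) (hid : i ≤ d) :
    fs i ∉ Ideal.span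
        (({p | ∃ i j : Fin n, i < j ∧ p = xv k n i * Tv k n j - xv k n j * Tv k n i} ∪
          {p | ∃ i ≤ d, p = fs i}) \ {fs i}) := by
  intro hmem
  obtain ⟨c, hsupp, hsum⟩ := Submodule.mem_span_set.mp hmem
  set m : ℕ × ℕ := (d - i, i) with hm
  have hfsI2 : fs i ∈ I2 k n := by
    have hgm : fs i = ∑ a ∈ c.support,
        weightedHomogeneousComponent (w n) m (c a * a) := by
      conv_lhs => rw [← IsWeightedHomogeneous.weightedHomogeneousComponent_same
        (fs_hom k n d F fs co h hF hF0 i hid), ← hsum]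
      rw [Finsupp.sum, map_sum]
      exact Finset.sum_congr rfl fun a _ => by rw [smul_eq_mul]
    rw [hgm]
    apply Ideal.sum_mem
    intro a ha
    have haset := hsupp ha
    obtain ⟨hag, hane⟩ := haset
    rcases hag with ⟨p, q, hpq, rfl⟩ | ⟨i', hi'd, rfl⟩
    · by_cases hle : ((1:ℕ), (1:ℕ)) ≤ m
      · have ha1 : 1 ≤ d - i := (Prod.le_def.mp hle).1
        have ha2 : 1 ≤ i := (Prod.le_def.mp hle).2
        have hm' : m = ((1:ℕ),(1:ℕ)) + (d - i - 1, i - 1) := by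
          rw [hm, Prod.mk_add_mk, Prod.mk.injEq]
          constructor <;> omega
        rw [hm', wHC_mul_right k n (minor_hom k n p q)]
        exact Ideal.mul_mem_left _ _ (Ideal.subset_span ⟨p, q, rfl⟩)
      · rw [wHC_mul_right_zero k n (minor_hom k n p q) _ _ hle]
        exact zero_mem _
    · by_cases hle : ((d - i' : ℕ), (i' : ℕ)) ≤ m
      · exfalso
        obtain ⟨ha1, ha2⟩ := Prod.le_def.mp hle
        simp only [hm] at ha1 ha2
        have hii : i' = i := by omega
        rw [hii] at hane
        exact hane rfl
      · rw [wHC_mul_right_zero k n (fs_hom k n d F fs co h hF hF0 i' hi'd) _ _ hle]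
        exact zero_mem _
  have h0 := I2_le_ker_toT k n hfsI2
  rw [RingHom.mem_ker, toT_fs k n d F fs co h i hid] at h0
  exact hF0 h0

lemma minimal_minor (hd : 2 ≤ d) (hF : F.IsHomogeneous d) (hF0 : F ≠ 0)
    (h : IsDowngradedSeq k n d F fs co) (p q : Fin n) (hpq : p < q) :
    xv k n p * Tv k n q - xv k n q * Tv k n p ∉ Ideal.span
        (({p | ∃ i j : Fin n, i < j ∧ p = xv k n i * Tv k n j - xv k n j * Tv k n i} ∪
          {p | ∃ i ≤ d, p = fs i}) \
          {xv k n p * Tv k n q - xv k n q * Tv k n p}) := by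
  intro hmem
  set g := xv k n p * Tv k n q - xv k n q * Tv k n p with hg
  set pairSet : Set (B k n) :=
    {r | ∃ i j : Fin n, i < j ∧ r = xv k n i * Tv k n j - xv k n j * Tv k n i} with hpairSet
  obtain ⟨c, hsupp, hsum⟩ := Submodule.mem_span_set.mp hmem
  set W : Submodule k (B k n) := Submodule.span k (insert (fs 1) (pairSet \ {g})) with hW
  have hgW : g ∈ W := by
    have hgm : g = ∑ a ∈ c.support,
        weightedHomogeneousComponent (w n) (1, 1) (c a * a) := by
      calc g = weightedHomogeneousComponent (w n) (1, 1) g :=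
            (IsWeightedHomogeneous.weightedHomogeneousComponent_same (minor_hom k n p q)).symm
        _ = weightedHomogeneousComponent (w n) (1, 1) (c.sum fun mi r => r • mi) := by
            rw [hsum]
        _ = ∑ a ∈ c.support,
            weightedHomogeneousComponent (w n) (1, 1) (c a * a) := by
            rw [Finsupp.sum, map_sum]
            exact Finset.sum_congr rfl fun a _ => by rw [smul_eq_mul]
    rw [hgm]
    apply Submodule.sum_mem
    intro a ha
    obtain ⟨hag, hane⟩ := hsupp ha
    have h11 : ((1:ℕ), (1:ℕ)) = ((1:ℕ),(1:ℕ)) + ((0:ℕ),(0:ℕ)) := by simp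
    rcases hag with ⟨a1, b1, hab1, rfl⟩ | ⟨i', hi'd, rfl⟩
    · rw [h11, wHC_mul_right k n (minor_hom k n a1 b1), wHC_zero_eq_C, ← smul_eq_C_mul]
      apply Submodule.smul_mem
      apply Submodule.subset_span
      apply Set.mem_insert_of_mem
      exact ⟨⟨a1, b1, hab1, rfl⟩, hane⟩
    · by_cases hcase : i' = 1 ∧ d = 2
      · obtain ⟨rfl, hd2⟩ := hcase
        have hfs1 : IsWeightedHomogeneous (w n) (fs 1) (1, 1) := by
          have h2 := fs_hom k n d F fs co h hF hF0 1 (by omega)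
          have : ((d - 1 : ℕ), (1:ℕ)) = ((1:ℕ), (1:ℕ)) := by
            rw [Prod.mk.injEq]
            omega
          rwa [this] at h2
        rw [h11, wHC_mul_right k n hfs1, wHC_zero_eq_C, ← smul_eq_C_mul]
        exact Submodule.smul_mem _ _ (Submodule.subset_span (Set.mem_insert _ _))
      · have hle : ¬ ((d - i' : ℕ), (i' : ℕ)) ≤ ((1:ℕ), (1:ℕ)) := by
          rw [Prod.le_def]
          push_neg
          intro h1
          omega
        rw [wHC_mul_right_zero k n (fs_hom k n d F fs co h hF hF0 i' hi'd) _ _ hle]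
        exact zero_mem _
  rw [hW, Submodule.mem_span_insert] at hgW
  obtain ⟨cc, z, hz, hgz⟩ := hgW
  by_cases hcc : cc = 0
  · rw [hcc, zero_smul, zero_add] at hgz
    have hker : Submodule.span k (pairSet \ {g}) ≤ LinearMap.ker (lcoeff k
        (Finsupp.single (Sum.inl p) 1 + Finsupp.single (Sum.inr q) 1)) := by
      rw [Submodule.span_le]
      rintro r ⟨⟨a1, b1, hab1, rfl⟩, hrne⟩
      rw [SetLike.mem_coe, LinearMap.mem_ker, lcoeff_apply]
      apply coeff_u0_other k n hpq hab1
      rintro ⟨rfl, rfl⟩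
      exact hrne rfl
    have h1 := hker hz
    rw [LinearMap.mem_ker, lcoeff_apply] at h1
    rw [← hgz, hg] at h1
    rw [coeff_u0_self k n hpq] at h1
    exact one_ne_zero h1
  · have hzI2 : z ∈ I2 k n := by
      have hle : Submodule.span k (pairSet \ {g})
          ≤ Submodule.restrictScalars k (I2 k n) := by
        rw [Submodule.span_le]
        rintro r ⟨⟨a1, b1, _, rfl⟩, _⟩
        exact Ideal.subset_span ⟨a1, b1, rfl⟩
      exact hle hz
    have hgI2 : g ∈ I2 k n := Ideal.subset_span ⟨p, q, rfl⟩
    have hfs1I2 : fs 1 ∈ I2 k n := by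
      have : fs 1 = cc⁻¹ • (g - z) := by
        rw [hgz]
        rw [add_sub_cancel_right, smul_smul, inv_mul_cancel₀ hcc, one_smul]
      rw [this]
      exact Submodule.smul_mem (Submodule.restrictScalars k (I2 k n)) cc⁻¹
        (Submodule.sub_mem _ hgI2 hzI2)
    have h0 := I2_le_ker_toT k n hfs1I2
    rw [RingHom.mem_ker, toT_fs k n d F fs co h 1 (by omega)] at h0
    exact hF0 h0

end minimality

/-- For `d ≥ 2`, the 2×2 minors of `ψ` together with `f₀, …, f_d` form a minimal generating set
of the defining ideal `J`: they generate `J`, and no member of this set lies in the ideal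
generated by the others. -/
theorem minimal_generating_set (hn : 2 ≤ n) (d : ℕ) (hd : 2 ≤ d)
    (F : MvPolynomial (Fin n) k) (hF : F.IsHomogeneous d) (hF0 : F ≠ 0)
    (fs : ℕ → B k n) (co : ℕ → Fin n → B k n)
    (h : IsDowngradedSeq k n d F fs co) :
    Ideal.span
        ({p | ∃ i j : Fin n, i < j ∧ p = xv k n i * Tv k n j - xv k n j * Tv k n i} ∪
          {p | ∃ i ≤ d, p = fs i}) = Jdef k n F ∧
    ∀ g ∈ ({p | ∃ i j : Fin n, i < j ∧ p = xv k n i * Tv k n j - xv k n j * Tv k n i} ∪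
          {p | ∃ i ≤ d, p = fs i} : Set (B k n)),
      g ∉ Ideal.span
        (({p | ∃ i j : Fin n, i < j ∧ p = xv k n i * Tv k n j - xv k n j * Tv k n i} ∪
          {p | ∃ i ≤ d, p = fs i}) \ {g}) := by
  constructor
  · exact le_antisymm (span_le_Jdef k n d F fs co h) (Jdef_le_span k n d F hF hF0 fs co h)
  · intro g hg
    rcases hg with ⟨p, q, hpq, rfl⟩ | ⟨i, hid, rfl⟩
    · exact minimal_minor k n d F fs co hd hF hF0 h p q hpq
    · exact minimal_fs k n d F fs co hd hF hF0 h i hid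

end
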